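/- arXiv:2208.08679 — 4 statements merged into one kernel-verified Lean document; each statement's English description precedes it below -/
import Mathlib

section
/- Let X ∈ ℝ^{n×p} and λ > 0, and let γ̂ ∈ ℝ^{p−1} minimize γ ↦ (1/n)‖X₁ − X₋₁γ‖² + 2λ‖γ‖₁ over ℝ^{p−1}. Define τ̃² := (1/n)‖X₁ − X₋₁γ̂‖² and τ̂² := τ̃² + λ‖γ̂‖₁. Then τ̂² = (1/n)·X₁ᵀ(X₁ − X₋₁γ̂). -/
open MeasureTheory ProbabilityTheory Filter Finset Matrix Topology

noncomputable section

/-- Squared Euclidean norm of a vector in `ℝ^m`. -/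
def sqNorm {m : ℕ} (v : Fin m → ℝ) : ℝ := ∑ i, (v i) ^ 2

/-- ℓ¹ norm of a vector in `ℝ^m`. -/
def l1Norm {m : ℕ} (v : Fin m → ℝ) : ℝ := ∑ i, |v i|

/-- ℓ^∞ norm (maximum absolute entry) of a vector in `ℝ^m`. -/
def supNorm {m : ℕ} (v : Fin m → ℝ) : ℝ := ⨆ i, |v i|

/-- First entry of a vector (0 if the vector is empty). -/
def fstEntry {P : ℕ} (v : Fin P → ℝ) : ℝ := if h : 0 < P then v ⟨0, h⟩ else 0

/-- Index of the (j+2)-nd column, as an element of `Fin P`, for `j : Fin (P-1)`. -/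
def colIdx {P : ℕ} (j : Fin (P - 1)) : Fin P := ⟨j.1 + 1, by have := j.isLt; omega⟩

/-- First column of the design matrix `X` (rows indexed by `Fin n`, columns by `Fin P`). -/
def col0 {n P : ℕ} (X : Fin n → Fin P → ℝ) : Fin n → ℝ := fun i => fstEntry (X i)

/-- Residual `X₁ - X₋₁ γ` of the node-wise regression of the first column on the others. -/
def nwRes {n P : ℕ} (X : Fin n → Fin P → ℝ) (g : Fin (P - 1) → ℝ) : Fin n → ℝ :=
  fun i => col0 X i - ∑ j : Fin (P - 1), X i (colIdx j) * g j

/-- Node-wise Lasso objective `(1/n)‖X₁ - X₋₁γ‖² + 2λ‖γ‖₁`. -/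
def nwObj {n P : ℕ} (X : Fin n → Fin P → ℝ) (lam : ℝ) (g : Fin (P - 1) → ℝ) : ℝ :=
  (1 / n) * sqNorm (nwRes X g) + 2 * lam * l1Norm g

/-- `g` is a node-wise Lasso solution with tuning parameter `lam`. -/
def IsNodewiseSol {n P : ℕ} (X : Fin n → Fin P → ℝ) (lam : ℝ) (g : Fin (P - 1) → ℝ) : Prop :=
  ∀ γ : Fin (P - 1) → ℝ, nwObj X lam g ≤ nwObj X lam γ

/-- `τ̃² := (1/n)‖X₁ - X₋₁γ̂‖²`. -/
def tauTildeSq {n P : ℕ} (X : Fin n → Fin P → ℝ) (g : Fin (P - 1) → ℝ) : ℝ :=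
  (1 / n) * sqNorm (nwRes X g)

/-- `τ̂² := τ̃² + λ‖γ̂‖₁`. -/
def tauHatSq {n P : ℕ} (X : Fin n → Fin P → ℝ) (lam : ℝ) (g : Fin (P - 1) → ℝ) : ℝ :=
  tauTildeSq X g + lam * l1Norm g

/-- `Θ̂₁ := (1/τ̂²)(1, -γ̂ᵀ)ᵀ ∈ ℝ^P`. -/
def thetaHat {n P : ℕ} (X : Fin n → Fin P → ℝ) (lam : ℝ) (g : Fin (P - 1) → ℝ) :
    Fin P → ℝ :=
  fun j =>
    if h : j.1 = 0 then 1 / tauHatSq X lam g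
    else -(g ⟨j.1 - 1, by have := j.isLt; omega⟩) / tauHatSq X lam g

/-- Sample covariance matrix `Σ̂ := XᵀX/n`. -/
def sigmaHat {n P : ℕ} (X : Fin n → Fin P → ℝ) : Fin P → Fin P → ℝ :=
  fun j k => (1 / n) * ∑ i, X i j * X i k

/-- The vector `Σ̂Θ̂₁ - e₁`. -/
def biasVec {n P : ℕ} (X : Fin n → Fin P → ℝ) (lam : ℝ) (g : Fin (P - 1) → ℝ) :
    Fin P → ℝ :=
  fun j => (∑ k, sigmaHat X j k * thetaHat X lam g k) - (if j.1 = 0 then 1 else 0)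

/-- `Ω̂₁,₁ := Θ̂₁ᵀ Σ̂ Θ̂₁`. -/
def omegaHat {n P : ℕ} (X : Fin n → Fin P → ℝ) (lam : ℝ) (g : Fin (P - 1) → ℝ) : ℝ :=
  ∑ j, ∑ k, thetaHat X lam g j * sigmaHat X j k * thetaHat X lam g k

/-- Bias factor `f(λ) := ‖Σ̂Θ̂₁ - e₁‖_∞ / Ω̂₁,₁^{1/2}`. -/
def biasFactor {n P : ℕ} (X : Fin n → Fin P → ℝ) (lam : ℝ) (g : Fin (P - 1) → ℝ) : ℝ :=
  supNorm (biasVec X lam g) / Real.sqrt (omegaHat X lam g)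

/-- Restricted maximum eigenvalue `φ_max(s)` of the sample covariance of `X`. -/
def phiMax {n P : ℕ} (X : Fin n → Fin P → ℝ) (s : ℕ) : ℝ :=
  sSup {r : ℝ | ∃ z : Fin P → ℝ, z ≠ 0 ∧ {j : Fin P | z j ≠ 0}.ncard ≤ s ∧
    r = sqNorm (fun i => ∑ j, X i j * z j) / (n * sqNorm z)}

/-- Restricted minimum eigenvalue `φ_min(s)` of the sample covariance of `X`. -/
def phiMin {n P : ℕ} (X : Fin n → Fin P → ℝ) (s : ℕ) : ℝ :=
  sInf {r : ℝ | ∃ z : Fin P → ℝ, z ≠ 0 ∧ {j : Fin P | z j ≠ 0}.ncard ≤ s ∧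
    r = sqNorm (fun i => ∑ j, X i j * z j) / (n * sqNorm z)}

/-- Restricted eigenvalue `κ(s,c₀)²` of Bickel–Ritov–Tsybakov. -/
def kappaSq {n P : ℕ} (X : Fin n → Fin P → ℝ) (s : ℕ) (c0 : ℝ) : ℝ :=
  sInf {r : ℝ | ∃ S : Finset (Fin P), S.card ≤ s ∧ ∃ z : Fin P → ℝ, z ≠ 0 ∧
    (∑ j ∈ Sᶜ, |z j|) ≤ c0 * ∑ j ∈ S, |z j| ∧
    r = sqNorm (fun i => ∑ j, X i j * z j) / (n * ∑ j ∈ S, (z j) ^ 2)}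

/-- The columns of `X` are in general position. -/
def InGeneralPosition {n P : ℕ} (X : Fin n → Fin P → ℝ) : Prop :=
  ∀ k : ℕ, k < min n P → ∀ ι : Fin (k + 1) → Fin P, Function.Injective ι →
    ∀ σ : Fin (k + 1) → ℝ, (∀ l, σ l = 1 ∨ σ l = -1) →
      ∀ i : Fin P, i ∉ Set.range ι → ∀ s : ℝ, s = 1 ∨ s = -1 →
        (s • fun r => X r i) ∉
          affineSpan ℝ (Set.range fun l => σ l • fun r => X r (ι l))

/-- `b` is a Lasso solution for response `Y`, design `X`, tuning parameter `lam`. -/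
def IsLassoSol {n P : ℕ} (X : Fin n → Fin P → ℝ) (Y : Fin n → ℝ) (lam : ℝ)
    (b : Fin P → ℝ) : Prop :=
  ∀ β : Fin P → ℝ,
    (1 / n) * sqNorm (fun i => Y i - ∑ j, X i j * b j) + 2 * lam * l1Norm b ≤
      (1 / n) * sqNorm (fun i => Y i - ∑ j, X i j * β j) + 2 * lam * l1Norm β

/-- The debiased Lasso `b̂₁ := β̂₁ + (1/n)Θ̂₁ᵀXᵀ(Y - Xβ̂)`. -/
def debiasedLasso {n P : ℕ} (X : Fin n → Fin P → ℝ) (Y : Fin n → ℝ)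
    (Theta : Fin P → ℝ) (bh : Fin P → ℝ) : ℝ :=
  fstEntry bh + (1 / n) * ∑ j, Theta j * ∑ i, X i j * (Y i - ∑ k, X i k * bh k)

/-- `W₁ := (1/√n)Θ̂₁ᵀXᵀε`. -/
def W1 {n P : ℕ} (X : Fin n → Fin P → ℝ) (Theta : Fin P → ℝ) (e : Fin n → ℝ) : ℝ :=
  (1 / Real.sqrt n) * ∑ j, Theta j * ∑ i, X i j * e i

/-- `Δ₁ := √n (Σ̂Θ̂₁ - e₁)ᵀ(β₀ - β̂)`. -/
def Delta1 {n P : ℕ} (X : Fin n → Fin P → ℝ) (Theta : Fin P → ℝ)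
    (b0 bh : Fin P → ℝ) : ℝ :=
  Real.sqrt n * ∑ j, ((∑ k, sigmaHat X j k * Theta k) - (if j.1 = 0 then 1 else 0)) *
    (b0 j - bh j)

/-- Standard normal cumulative distribution function. -/
def gaussCdf (z : ℝ) : ℝ := ((gaussianReal 0 1) (Set.Iic z)).toReal


/-- `τ̂² = (1/n)·X₁ᵀ(X₁ − X₋₁γ̂)` via the KKT conditions. -/
theorem statement8 (n p : ℕ) (hn : 1 ≤ n) (hp : 2 ≤ p)
    (X : Fin n → Fin p → ℝ) (lam : ℝ) (hlam : 0 < lam)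
    (g : Fin (p - 1) → ℝ) (hsol : IsNodewiseSol X lam g) :
    tauHatSq X lam g = (1 / n) * ∑ i, col0 X i * nwRes X g i := by
  have hnpos : (0:ℝ) < n := by exact_mod_cast hn
  set r : Fin n → ℝ := nwRes X g with hr
  set u : Fin n → ℝ := fun i => ∑ j : Fin (p - 1), X i (colIdx j) * g j with hu
  set A : ℝ := ∑ i, (r i) ^ 2 with hA
  set B : ℝ := ∑ i, r i * u i with hB
  set C : ℝ := ∑ i, (u i) ^ 2 with hC
  set L : ℝ := l1Norm g with hL
  have key : ∀ t : ℝ, -1 < t → t < 1 →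
      2*t*((1/n)*B - lam*L) ≤ t^2 * ((1/n)*C) := by
    intro t ht1 ht2
    have h := hsol (fun j => (1+t) * g j)
    have hres : ∀ i, nwRes X (fun j => (1+t) * g j) i = r i - t * u i := by
      intro i
      have h1 : ∑ j : Fin (p-1), X i (colIdx j) * ((1+t) * g j)
          = (1+t) * ∑ j : Fin (p-1), X i (colIdx j) * g j := by
        rw [Finset.mul_sum]; exact Finset.sum_congr rfl fun j _ => by ring
      simp only [hr, hu, nwRes, h1]
      ring
    have hsq : sqNorm (nwRes X (fun j => (1+t) * g j)) = A - 2*t*B + t^2*C := by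
      simp only [sqNorm, hres, hA, hB, hC, Finset.mul_sum]
      rw [← Finset.sum_sub_distrib, ← Finset.sum_add_distrib]
      exact Finset.sum_congr rfl fun i _ => by ring
    have hl1 : l1Norm (fun j => (1+t) * g j) = (1+t) * L := by
      simp only [l1Norm, hL, Finset.mul_sum]
      refine Finset.sum_congr rfl fun j _ => ?_
      rw [abs_mul, abs_of_pos (by linarith : (0:ℝ) < 1 + t)]
    have hobj1 : nwObj X lam g = (1/n) * A + 2*lam*L := by
      simp only [nwObj, sqNorm, hA, hL, hr]
    have hobj2 : nwObj X lam (fun j => (1+t) * g j)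
        = (1/n) * (A - 2*t*B + t^2*C) + 2*lam*((1+t)*L) := by
      simp only [nwObj, hsq, hl1]
    rw [hobj1, hobj2] at h
    have hn' : (0:ℝ) < 1/n := by positivity
    nlinarith [h]
  have hCpos : 0 ≤ (1/n)*C := by
    have : 0 ≤ C := Finset.sum_nonneg fun i _ => sq_nonneg _
    positivity
  have hD : (1/n)*B - lam*L = 0 := by
    set D : ℝ := (1/n)*B - lam*L with hDdef
    set E : ℝ := (1/n)*C with hEdef
    by_contra hD0
    have habs : 0 < |D| := abs_pos.mpr hD0
    set t : ℝ := min (1/2) (|D|/(E+1)) with htdef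
    have ht0 : 0 < t := lt_min (by norm_num) (by positivity)
    have ht1 : t < 1 := lt_of_le_of_lt (min_le_left _ _) (by norm_num)
    have h1 := key t (by linarith) ht1
    have h2 := key (-t) (by linarith) (by linarith)
    have h3 : 2*t*|D| ≤ t^2*E := by
      rcases abs_cases D with ⟨h,_⟩|⟨h,_⟩ <;> rw [h] <;> nlinarith [h1, h2]
    have h4 : t ≤ |D|/(E+1) := min_le_right _ _
    have h5 : t*(E+1) ≤ |D| := by
      rw [← le_div_iff₀ (by linarith : (0:ℝ) < E+1)]; exact h4
    nlinarith [mul_pos ht0 habs, h3, h5, sq_nonneg t]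
  have hcol : ∀ i, col0 X i = r i + u i := by
    intro i; simp only [hr, nwRes, hu]; ring
  have hsum : ∑ i, col0 X i * r i = A + B := by
    simp only [hcol, hA, hB]
    rw [← Finset.sum_add_distrib]
    exact Finset.sum_congr rfl fun i _ => by ring
  have htau : tauHatSq X lam g = (1/n)*A + lam*L := by
    simp only [tauHatSq, tauTildeSq, sqNorm, hA, hL, hr]
  rw [htau, hsum]
  have : lam * L = (1/n)*B := by linarith
  rw [this]; ring

end
end

section
/- Let X ∈ ℝ^{n×p} and λ > 0, and let γ̂ ∈ ℝ^{p−1} be a node-wise Lasso solution with τ̂² := (1/n)‖X₁ − X₋₁γ̂‖² + λ‖γ̂‖₁ > 0, and set Θ̂₁ := (1/τ̂²)(1, −γ̂ᵀ)ᵀ ∈ ℝ^p, Σ̂ := XᵀX/n. Then ‖Σ̂Θ̂₁ − e₁‖_∞ ≤ λ/τ̂², and consequently, for any β̂, β₀ ∈ ℝ^p, |√n·(Σ̂Θ̂₁ − e₁)ᵀ(β₀ − β̂)| ≤ √n·(λ/τ̂²)·‖β̂ − β₀‖₁. -/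
open MeasureTheory ProbabilityTheory Filter Finset Matrix Topology

noncomputable section

/-!
Perturbing the node-wise Lasso objective along one coordinate `γⱼ` by `s t` and letting
`s → 0⁺` gives the KKT conditions: the correlation `cⱼ = Xⱼ₊₁ᵀ r / n` of the residual
`r = X₁ - X₋₁γ̂` with each other column satisfies `|cⱼ| ≤ λ` and `γ̂ⱼ cⱼ = λ |γ̂ⱼ|`.
Since `X Θ̂₁ = r / τ̂²`, the entries of `Σ̂Θ̂₁` are the correlations `Xₖᵀ r / n` divided by `τ̂²`;
the first one is `‖r‖² / n + ∑ⱼ γ̂ⱼ cⱼ = τ̂²`, which cancels `e₁`, and the others are bounded by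
`λ / τ̂²`. The bound on the bias term is then Hölder's inequality.
-/

theorem abs_le_and_mul_eq_of_forall_mul_le {b x L : ℝ} (hL : 0 ≤ L)
    (h : ∀ t, t * b ≤ L * (|x + t| - |x|)) : |b| ≤ L ∧ x * b = L * |x| := by
  have hplus : |x + 1| - |x| ≤ 1 := by linarith [abs_add_le x 1, abs_one (α := ℝ)]
  have hminus : |x + -1| - |x| ≤ 1 := by
    linarith [abs_add_le x (-1), abs_neg (1 : ℝ), abs_one (α := ℝ)]
  have hzero := h (-x)
  have hdouble := h x
  rw [add_neg_cancel, abs_zero] at hzero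
  rw [← two_mul, abs_mul, abs_two] at hdouble
  refine ⟨abs_le.2 ⟨?_, ?_⟩, ?_⟩
  · linarith [h (-1), mul_le_mul_of_nonneg_left hminus hL]
  · linarith [h 1, mul_le_mul_of_nonneg_left hplus hL]
  · linarith

theorem forall_mul_le_of_forall_quadratic_le {b c x L : ℝ} (hL : 0 ≤ L)
    (h : ∀ t, 0 ≤ t ^ 2 * c - 2 * t * b + 2 * L * (|x + t| - |x|)) (t : ℝ) :
    t * b ≤ L * (|x + t| - |x|) := by
  -- By convexity of `|·|`, the perturbation by `s t` is at most `s` times the one by `t`,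
  -- so dividing by `s` leaves the quadratic term with a factor `s → 0`.
  have hscaled : ∀ s ∈ Set.Ioc (0 : ℝ) 1,
      0 ≤ s * (t ^ 2 * c) + 2 * (L * (|x + t| - |x|) - t * b) := by
    rintro s ⟨hs0, hs1⟩
    have hconv : |x + s * t| ≤ (1 - s) * |x| + s * |x + t| := by
      calc |x + s * t| = |(1 - s) * x + s * (x + t)| := by ring_nf
        _ ≤ |(1 - s) * x| + |s * (x + t)| := abs_add_le _ _
        _ = (1 - s) * |x| + s * |x + t| := by
          rw [abs_mul, abs_mul, abs_of_nonneg (by linarith : 0 ≤ 1 - s), abs_of_pos hs0]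
    have hst := h (s * t)
    have : 0 ≤ s * (s * (t ^ 2 * c) + 2 * (L * (|x + t| - |x|) - t * b)) := by
      linarith [mul_le_mul_of_nonneg_left hconv hL]
    exact nonneg_of_mul_nonneg_right this hs0
  have hlim : Tendsto (fun s : ℝ => s * (t ^ 2 * c) + 2 * (L * (|x + t| - |x|) - t * b))
      (𝓝[>] 0) (𝓝 (2 * (L * (|x + t| - |x|) - t * b))) := by
    have : Continuous (fun s : ℝ => s * (t ^ 2 * c) + 2 * (L * (|x + t| - |x|) - t * b)) := by
      fun_prop
    simpa using (this.tendsto 0).mono_left nhdsWithin_le_nhds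
  have := ge_of_tendsto hlim (eventually_of_mem (Ioc_mem_nhdsGT one_pos) hscaled)
  linarith

theorem sqNorm_sub_smul {m : ℕ} (v w : Fin m → ℝ) (t : ℝ) :
    sqNorm (v - t • w) = sqNorm v - 2 * t * ∑ i, w i * v i + t ^ 2 * sqNorm w := by
  simp only [sqNorm, Pi.sub_apply, Pi.smul_apply, smul_eq_mul, Finset.mul_sum,
    ← Finset.sum_sub_distrib, ← Finset.sum_add_distrib]
  exact Finset.sum_congr rfl fun i _ => by ring

theorem l1Norm_add_single {m : ℕ} (v : Fin m → ℝ) (j : Fin m) (t : ℝ) :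
    l1Norm (v + Pi.single j t) = l1Norm v + (|v j + t| - |v j|) := by
  rw [← sub_eq_iff_eq_add', l1Norm, l1Norm, ← Finset.sum_sub_distrib,
    Finset.sum_eq_single_of_mem j (Finset.mem_univ j)]
  · simp
  · intro k _ hk
    simp [hk]

theorem abs_sum_mul_le_supNorm_mul_l1Norm {m : ℕ} (v w : Fin m → ℝ) :
    |∑ i, v i * w i| ≤ supNorm v * l1Norm w := by
  calc |∑ i, v i * w i| ≤ ∑ i, |v i| * |w i| := by
        simpa only [abs_mul] using Finset.abs_sum_le_sum_abs (fun i => v i * w i) Finset.univ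
    _ ≤ ∑ i, supNorm v * |w i| := Finset.sum_le_sum fun i _ =>
        mul_le_mul_of_nonneg_right (le_ciSup (Finite.bddAbove_range fun i => |v i|) i)
          (abs_nonneg _)
    _ = supNorm v * l1Norm w := by rw [l1Norm, Finset.mul_sum]

theorem l1Norm_sub_comm {m : ℕ} (v w : Fin m → ℝ) :
    l1Norm (fun i => v i - w i) = l1Norm (fun i => w i - v i) := by
  simp only [l1Norm, abs_sub_comm]

theorem l1Norm_nonneg {m : ℕ} (v : Fin m → ℝ) : 0 ≤ l1Norm v :=
  Finset.sum_nonneg fun i _ => abs_nonneg (v i)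

theorem sum_eq_add_sum_colIdx {M : Type*} [AddCommMonoid M] {P : ℕ} (hP : 0 < P)
    (f : Fin P → M) : ∑ k, f k = f ⟨0, hP⟩ + ∑ j : Fin (P - 1), f (colIdx j) := by
  obtain ⟨q, rfl⟩ : ∃ q, P = q + 1 := ⟨P - 1, by omega⟩
  exact Fin.sum_univ_succ f

theorem eq_zero_or_exists_eq_colIdx {P : ℕ} (hP : 0 < P) (k : Fin P) :
    k = ⟨0, hP⟩ ∨ ∃ j, k = colIdx j := by
  obtain ⟨q, rfl⟩ : ∃ q, P = q + 1 := ⟨P - 1, by omega⟩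
  exact (Fin.eq_zero_or_eq_succ k).imp id fun ⟨j, h⟩ => ⟨j, h⟩

theorem nwRes_add_single {n P : ℕ} (X : Fin n → Fin P → ℝ) (g : Fin (P - 1) → ℝ)
    (j : Fin (P - 1)) (t : ℝ) :
    nwRes X (g + Pi.single j t) = nwRes X g - t • fun i => X i (colIdx j) := by
  funext i
  simp only [nwRes, Pi.add_apply, Pi.single_apply, mul_add, mul_ite, mul_zero,
    Finset.sum_add_distrib, Finset.sum_ite_eq', Finset.mem_univ, if_true, Pi.sub_apply,
    Pi.smul_apply, smul_eq_mul]
  ring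

def nwCorr {n P : ℕ} (X : Fin n → Fin P → ℝ) (g : Fin (P - 1) → ℝ) (k : Fin P) : ℝ :=
  (1 / n) * ∑ i, X i k * nwRes X g i

theorem nwObj_add_single {n P : ℕ} (X : Fin n → Fin P → ℝ) (lam : ℝ) (g : Fin (P - 1) → ℝ)
    (j : Fin (P - 1)) (t : ℝ) :
    nwObj X lam (g + Pi.single j t) = nwObj X lam g +
      (t ^ 2 * ((1 / n) * sqNorm fun i => X i (colIdx j)) - 2 * t * nwCorr X g (colIdx j)
        + 2 * lam * (|g j + t| - |g j|)) := by
  rw [nwObj, nwObj, nwRes_add_single, sqNorm_sub_smul, l1Norm_add_single, nwCorr]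
  ring

theorem IsNodewiseSol.kkt {n P : ℕ} {X : Fin n → Fin P → ℝ} {lam : ℝ} {g : Fin (P - 1) → ℝ}
    (hsol : IsNodewiseSol X lam g) (hlam : 0 ≤ lam) (j : Fin (P - 1)) :
    |nwCorr X g (colIdx j)| ≤ lam ∧ g j * nwCorr X g (colIdx j) = lam * |g j| := by
  refine abs_le_and_mul_eq_of_forall_mul_le hlam
    (forall_mul_le_of_forall_quadratic_le (c := (1 / n) * sqNorm fun i => X i (colIdx j)) hlam
      fun t => ?_)
  have := hsol (g + Pi.single j t)
  rw [nwObj_add_single] at this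
  linarith

section ThetaHat

variable {n P : ℕ} (X : Fin n → Fin P → ℝ) (lam : ℝ) (g : Fin (P - 1) → ℝ)

theorem thetaHat_zero (hP : 0 < P) : thetaHat X lam g ⟨0, hP⟩ = 1 / tauHatSq X lam g :=
  dif_pos rfl

theorem thetaHat_colIdx (j : Fin (P - 1)) :
    thetaHat X lam g (colIdx j) = -g j / tauHatSq X lam g :=
  dif_neg j.val.succ_ne_zero

theorem sum_mul_thetaHat (hP : 0 < P) (i : Fin n) :
    ∑ k, X i k * thetaHat X lam g k = nwRes X g i / tauHatSq X lam g := by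
  rw [sum_eq_add_sum_colIdx hP, thetaHat_zero]
  simp only [thetaHat_colIdx, nwRes, col0, fstEntry, dif_pos hP, mul_div_assoc', mul_neg,
    neg_div, Finset.sum_neg_distrib, sub_div, Finset.sum_div]
  ring

theorem sum_sigmaHat_mul_thetaHat (hP : 0 < P) (j : Fin P) :
    ∑ k, sigmaHat X j k * thetaHat X lam g k = nwCorr X g j / tauHatSq X lam g := by
  calc ∑ k, sigmaHat X j k * thetaHat X lam g k
      = (1 / n) * ∑ i, X i j * ∑ k, X i k * thetaHat X lam g k := by
        simp only [sigmaHat, Finset.mul_sum, Finset.sum_mul]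
        rw [Finset.sum_comm]
        exact Finset.sum_congr rfl fun _ _ => Finset.sum_congr rfl fun _ _ => by ring
    _ = nwCorr X g j / tauHatSq X lam g := by
        simp only [sum_mul_thetaHat X lam g hP, nwCorr, mul_div_assoc', ← Finset.sum_div]

end ThetaHat

theorem IsNodewiseSol.nwCorr_zero {n P : ℕ} {X : Fin n → Fin P → ℝ} {lam : ℝ}
    {g : Fin (P - 1) → ℝ} (hsol : IsNodewiseSol X lam g) (hlam : 0 ≤ lam) (hP : 0 < P) :
    nwCorr X g ⟨0, hP⟩ = tauHatSq X lam g := by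
  have hcol : ∀ i, X i ⟨0, hP⟩ = nwRes X g i + ∑ m, X i (colIdx m) * g m := fun i => by
    rw [nwRes, col0, fstEntry, dif_pos hP, sub_add_cancel]
  calc nwCorr X g ⟨0, hP⟩ = tauTildeSq X g + ∑ m, g m * nwCorr X g (colIdx m) := by
        simp only [nwCorr, tauTildeSq, sqNorm, hcol, add_mul, Finset.sum_add_distrib,
          Finset.mul_sum, Finset.sum_mul]
        rw [Finset.sum_comm (f := fun i m => _)]
        simp only [mul_add, Finset.mul_sum]
        congr 1
        · exact Finset.sum_congr rfl fun i _ => by ring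
        · exact Finset.sum_congr rfl fun m _ => Finset.sum_congr rfl fun i _ => by ring
    _ = tauHatSq X lam g := by
        simp only [fun m => (hsol.kkt hlam m).2, tauHatSq, l1Norm, Finset.mul_sum]

theorem IsNodewiseSol.abs_biasVec_le {n P : ℕ} {X : Fin n → Fin P → ℝ} {lam : ℝ}
    {g : Fin (P - 1) → ℝ} (hsol : IsNodewiseSol X lam g) (hlam : 0 ≤ lam) (hP : 0 < P)
    (hτ : 0 < tauHatSq X lam g) (k : Fin P) :
    |biasVec X lam g k| ≤ lam / tauHatSq X lam g := by
  rw [biasVec, sum_sigmaHat_mul_thetaHat X lam g hP]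
  rcases eq_zero_or_exists_eq_colIdx hP k with rfl | ⟨j, rfl⟩
  · rw [hsol.nwCorr_zero hlam hP, div_self hτ.ne', if_pos rfl, sub_self, abs_zero]
    positivity
  · have hj : (colIdx j).val ≠ 0 := j.val.succ_ne_zero
    rw [if_neg hj, sub_zero, abs_div, abs_of_pos hτ]
    exact div_le_div_of_nonneg_right (hsol.kkt hlam j).1 hτ.le

theorem statement9_general (n p : ℕ) (hp : 2 ≤ p)
    (X : Fin n → Fin p → ℝ) (lam : ℝ) (hlam : 0 < lam)
    (g : Fin (p - 1) → ℝ) (hsol : IsNodewiseSol X lam g)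
    (hτ : 0 < tauHatSq X lam g) :
    supNorm (biasVec X lam g) ≤ lam / tauHatSq X lam g ∧
      ∀ bhat b0 : Fin p → ℝ,
        |Real.sqrt n * ∑ j, biasVec X lam g j * (b0 j - bhat j)| ≤
          Real.sqrt n * (lam / tauHatSq X lam g) * l1Norm (fun j => bhat j - b0 j) := by
  have hsup : supNorm (biasVec X lam g) ≤ lam / tauHatSq X lam g :=
    Real.iSup_le (hsol.abs_biasVec_le hlam.le (by omega) hτ) (by positivity)
  refine ⟨hsup, fun bhat b0 => ?_⟩
  rw [abs_mul, abs_of_nonneg (Real.sqrt_nonneg _), mul_assoc, l1Norm_sub_comm]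
  gcongr
  calc |∑ j, biasVec X lam g j * (b0 j - bhat j)|
      ≤ supNorm (biasVec X lam g) * l1Norm (fun j => b0 j - bhat j) :=
        abs_sum_mul_le_supNorm_mul_l1Norm _ _
    _ ≤ lam / tauHatSq X lam g * l1Norm (fun j => b0 j - bhat j) :=
        mul_le_mul_of_nonneg_right hsup (l1Norm_nonneg _)

/-- `‖Σ̂Θ̂₁ − e₁‖_∞ ≤ λ/τ̂²` and the resulting Hölder bound on the bias. -/
theorem statement9 (n p : ℕ) (hn : 1 ≤ n) (hp : 2 ≤ p)
    (X : Fin n → Fin p → ℝ) (lam : ℝ) (hlam : 0 < lam)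
    (g : Fin (p - 1) → ℝ) (hsol : IsNodewiseSol X lam g)
    (hτ : 0 < tauHatSq X lam g) :
    supNorm (biasVec X lam g) ≤ lam / tauHatSq X lam g ∧
      ∀ bhat b0 : Fin p → ℝ,
        |Real.sqrt n * ∑ j, biasVec X lam g j * (b0 j - bhat j)| ≤
          Real.sqrt n * (lam / tauHatSq X lam g) * l1Norm (fun j => bhat j - b0 j) :=
  statement9_general n p hp X lam hlam g hsol hτ

end
end

section
/- Let X ∈ ℝ^{n×p}, λ > 0, and let γ̂ ∈ ℝ^{p−1} be a node-wise Lasso solution; set τ̃² := (1/n)‖X₁ − X₋₁γ̂‖², τ̂² := τ̃² + λ‖γ̂‖₁, Θ̂₁ := (1/τ̂²)(1, −γ̂ᵀ)ᵀ, and Σ̂ := XᵀX/n, and assume τ̃² > 0. Then Ω̂₁,₁ := Θ̂₁ᵀΣ̂Θ̂₁ = τ̃²/τ̂⁴, and Ω̂₁,₁ ≤ 1/τ̃². -/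
open MeasureTheory ProbabilityTheory Filter Finset Matrix Topology

noncomputable section

lemma sum_split_first {p : ℕ} (hp : 2 ≤ p) (F : Fin p → ℝ) :
    ∑ j, F j = F ⟨0, by omega⟩ + ∑ j : Fin (p - 1), F (colIdx j) := by
  obtain ⟨m, rfl⟩ : ∃ m, p = m + 1 := ⟨p - 1, by omega⟩
  rw [Fin.sum_univ_succ]
  rfl

/-- `Ω̂₁,₁ = τ̃²/τ̂⁴` and `Ω̂₁,₁ ≤ 1/τ̃²`. -/
theorem statement10 (n p : ℕ) (hn : 1 ≤ n) (hp : 2 ≤ p)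
    (X : Fin n → Fin p → ℝ) (lam : ℝ) (hlam : 0 < lam)
    (g : Fin (p - 1) → ℝ) (hsol : IsNodewiseSol X lam g)
    (hτ : 0 < tauTildeSq X g) :
    omegaHat X lam g = tauTildeSq X g / (tauHatSq X lam g) ^ 2 ∧
      omegaHat X lam g ≤ 1 / tauTildeSq X g := by
  set t := tauHatSq X lam g with ht
  have hl1 : 0 ≤ l1Norm g := Finset.sum_nonneg fun i _ => abs_nonneg _
  have htt : tauTildeSq X g ≤ t := by
    rw [ht, tauHatSq]
    nlinarith
  have ht0 : 0 < t := lt_of_lt_of_le hτ htt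
  -- X Θ̂₁ = residual / t
  have hXθ : ∀ i, ∑ j, X i j * thetaHat X lam g j = nwRes X g i / t := by
    intro i
    rw [sum_split_first hp]
    have h0 : thetaHat X lam g ⟨0, by omega⟩ = 1 / t := by
      simp [thetaHat, ht]
    have hj : ∀ j : Fin (p - 1), thetaHat X lam g (colIdx j) = -(g j) / t := by
      intro j
      rw [thetaHat, dif_neg (by simp [colIdx])]
      congr 2
    have hc : col0 X i = X i ⟨0, by omega⟩ := by
      rw [col0, fstEntry, dif_pos (by omega)]
    have expand : ∑ j : Fin (p - 1), X i (colIdx j) * (-(g j) / t) =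
        -((∑ j : Fin (p - 1), X i (colIdx j) * g j) / t) :=
      calc ∑ j : Fin (p - 1), X i (colIdx j) * (-(g j) / t)
          = ∑ j : Fin (p - 1), -((X i (colIdx j) * g j) / t) :=
            Finset.sum_congr rfl fun j _ => by ring
        _ = -((∑ j : Fin (p - 1), X i (colIdx j) * g j) / t) := by
            rw [Finset.sum_neg_distrib, Finset.sum_div]
    rw [h0]
    simp only [hj]
    rw [expand, nwRes, hc, sub_div, mul_one_div]
    ring
  -- Ω = (1/n) Σᵢ (XΘ)ᵢ²
  have hkey : omegaHat X lam g = (1 / n) * ∑ i, (∑ j, X i j * thetaHat X lam g j) ^ 2 := by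
    set θ := thetaHat X lam g with hθ
    have hterm : ∀ j k : Fin p, θ j * sigmaHat X j k * θ k =
        ∑ i, (1 / (n : ℝ)) * (X i j * θ j) * (X i k * θ k) := by
      intro j k
      rw [sigmaHat]
      rw [Finset.mul_sum, Finset.mul_sum, Finset.sum_mul]
      exact Finset.sum_congr rfl fun i _ => by ring
    calc omegaHat X lam g
        = ∑ j, ∑ k, ∑ i, (1 / (n : ℝ)) * (X i j * θ j) * (X i k * θ k) :=
          Finset.sum_congr rfl fun j _ => Finset.sum_congr rfl fun k _ => hterm j k
      _ = ∑ j, ∑ i, ∑ k, (1 / (n : ℝ)) * (X i j * θ j) * (X i k * θ k) :=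
          Finset.sum_congr rfl fun j _ => Finset.sum_comm
      _ = ∑ i, ∑ j, ∑ k, (1 / (n : ℝ)) * (X i j * θ j) * (X i k * θ k) :=
          Finset.sum_comm
      _ = (1 / n) * ∑ i, (∑ j, X i j * θ j) ^ 2 := by
          rw [Finset.mul_sum]
          refine Finset.sum_congr rfl fun i _ => ?_
          rw [sq, Finset.sum_mul_sum, Finset.mul_sum]
          refine Finset.sum_congr rfl fun j _ => ?_
          rw [Finset.mul_sum]
          exact Finset.sum_congr rfl fun k _ => by ring
  have homega : omegaHat X lam g = tauTildeSq X g / t ^ 2 := by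
    rw [hkey]
    simp only [hXθ, div_pow]
    rw [← Finset.sum_div, tauTildeSq, sqNorm]
    field_simp
  refine ⟨homega, ?_⟩
  rw [homega]
  rw [div_le_div_iff₀ (by positivity) hτ]
  nlinarith [sq_nonneg (t - tauTildeSq X g)]

end
end

section
/- Let X ∈ ℝ^{n×p}, λ > 0, and let γ̂ ∈ ℝ^{p−1} be a node-wise Lasso solution whose support S := {j ∈ {2,…,p} : γ̂_j ≠ 0} is nonempty and whose active columns {X_j : j ∈ S} are linearly independent. Let X_S ∈ ℝ^{n×|S|} collect the columns indexed by S, Q_S := Iₙ − X_S(X_SᵀX_S)⁻¹X_Sᵀ, and κ_S ∈ ℝ^{|S|} the vector with entries sign(γ̂_j), j ∈ S. Then τ̃² := (1/n)‖X₁ − X₋₁γ̂‖² = (1/n)·X₁ᵀQ_SX₁ + λ²·κ_Sᵀ((1/n)X_SᵀX_S)⁻¹κ_S. -/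
open MeasureTheory ProbabilityTheory Filter Finset Matrix Topology

noncomputable section

/-- The active-column submatrix `X_S` of the node-wise Lasso. -/
def XS {n p : ℕ} (X : Fin n → Fin p → ℝ) (S : Finset (Fin (p - 1))) :
    Matrix (Fin n) {j // j ∈ S} ℝ :=
  Matrix.of fun i j => X i (colIdx j.1)


/-- KKT stationarity condition of the node-wise Lasso on the active set. -/
lemma nodewise_kkt {n P : ℕ} (hn : 1 ≤ n) (X : Fin n → Fin P → ℝ) (lam : ℝ)
    (g : Fin (P - 1) → ℝ) (hsol : IsNodewiseSol X lam g) (j : Fin (P - 1)) (hj : g j ≠ 0) :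
    ∑ i, X i (colIdx j) * nwRes X g i = n * lam * Real.sign (g j) := by
  classical
  have hnpos : (0:ℝ) < n := by exact_mod_cast hn
  set c : Fin n → ℝ := fun i => X i (colIdx j) with hc
  have hupd : ∀ t : ℝ, ∀ i, nwRes X (Function.update g j (g j + t)) i
      = nwRes X g i - t * c i := by
    intro t i
    have h1 : ∀ k ∈ Finset.univ, X i (colIdx k) * Function.update g j (g j + t) k
        = X i (colIdx k) * g k + (if k = j then X i (colIdx j) * t else 0) := by
      intro k _
      rcases eq_or_ne k j with rfl | hkj
      · simp only [Function.update_self, if_true]; ring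
      · simp [Function.update_of_ne hkj, hkj]
    simp only [nwRes]
    rw [Finset.sum_congr rfl h1, Finset.sum_add_distrib,
      Finset.sum_ite_eq' Finset.univ j]
    simp only [Finset.mem_univ, if_pos, hc]
    ring
  have habs : ∀ t : ℝ, |t| ≤ |g j| → |g j + t| = |g j| + Real.sign (g j) * t := by
    intro t ht
    obtain ⟨ht1, ht2⟩ := abs_le.mp ht
    rcases hj.lt_or_gt with hneg | hpos
    · rw [Real.sign_of_neg hneg, abs_of_neg hneg] at *
      rw [abs_of_nonpos (by linarith)]
      ring
    · rw [Real.sign_of_pos hpos, abs_of_pos hpos] at *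
      rw [abs_of_nonneg (by linarith)]
      ring
  have hl1 : ∀ t : ℝ, |t| ≤ |g j| →
      l1Norm (Function.update g j (g j + t)) = l1Norm g + Real.sign (g j) * t := by
    intro t ht
    have h1 : ∀ k ∈ Finset.univ, |Function.update g j (g j + t) k|
        = |g k| + (if k = j then Real.sign (g j) * t else 0) := by
      intro k _
      rcases eq_or_ne k j with rfl | hkj
      · simp only [Function.update_self, if_true, habs t ht]
      · simp [Function.update_of_ne hkj, hkj]
    simp only [l1Norm]
    rw [Finset.sum_congr rfl h1, Finset.sum_add_distrib,
      Finset.sum_ite_eq' Finset.univ j]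
    simp
  have hsq : ∀ t : ℝ, sqNorm (nwRes X (Function.update g j (g j + t)))
      = sqNorm (nwRes X g) - 2 * t * (∑ i, c i * nwRes X g i) + t ^ 2 * ∑ i, c i ^ 2 := by
    intro t
    simp only [sqNorm]
    calc ∑ i, (nwRes X (Function.update g j (g j + t)) i) ^ 2
        = ∑ i, ((nwRes X g i) ^ 2 - 2 * t * (c i * nwRes X g i) + t ^ 2 * c i ^ 2) := by
          refine Finset.sum_congr rfl fun i _ => ?_
          rw [hupd t i]; ring
      _ = _ := by
          rw [Finset.sum_add_distrib, Finset.sum_sub_distrib, ← Finset.mul_sum,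
            ← Finset.mul_sum]
  set a : ℝ := (1 / n) * ∑ i, c i ^ 2 with ha
  set b : ℝ := 2 * lam * Real.sign (g j) - (2 / n) * ∑ i, c i * nwRes X g i with hb
  have key : ∀ t : ℝ, |t| ≤ |g j| → 0 ≤ a * t ^ 2 + b * t := by
    intro t ht
    have h := hsol (Function.update g j (g j + t))
    rw [nwObj, nwObj, hsq t, hl1 t ht] at h
    have heq : a * t ^ 2 + b * t
        = ((1 / n) * (sqNorm (nwRes X g) - 2 * t * (∑ i, c i * nwRes X g i)
            + t ^ 2 * ∑ i, c i ^ 2) + 2 * lam * (l1Norm g + Real.sign (g j) * t))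
          - ((1 / n) * sqNorm (nwRes X g) + 2 * lam * l1Norm g) := by
      rw [ha, hb]; ring
    have h' := sub_nonneg.mpr h
    rw [← heq] at h'
    exact h'
  have ha' : 0 ≤ a := by
    rw [ha]
    have : (0:ℝ) ≤ ∑ i, c i ^ 2 := Finset.sum_nonneg fun i _ => sq_nonneg _
    positivity
  have hb0 : b = 0 := by
    by_contra hbne
    have hbpos : 0 < |b| := abs_pos.mpr hbne
    have hgjpos : 0 < |g j| := abs_pos.mpr hj
    set ε : ℝ := min (|g j| / |b|) (1 / (a + 1)) with hε
    have hεpos : 0 < ε := lt_min (div_pos hgjpos hbpos) (by positivity)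
    have h1 : ε * |b| ≤ |g j| := by
      have h := min_le_left (|g j| / |b|) (1 / (a + 1))
      calc ε * |b| ≤ (|g j| / |b|) * |b| := by
            exact mul_le_mul_of_nonneg_right h (le_of_lt hbpos)
        _ = |g j| := div_mul_cancel₀ _ (ne_of_gt hbpos)
    have h2 : a * ε < 1 := by
      have hεle : ε ≤ 1 / (a + 1) := min_le_right _ _
      have h3 : a * ε ≤ a * (1 / (a + 1)) := mul_le_mul_of_nonneg_left hεle ha'
      have h4 : a * (1 / (a + 1)) < 1 := by
        rw [mul_one_div, div_lt_one (by linarith)]; linarith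
      linarith
    have hk := key (-(ε * b)) (by rw [abs_neg, abs_mul, abs_of_pos hεpos]; exact h1)
    have hbb : 0 < b ^ 2 := by positivity
    have h5 : (a * ε) * (ε * b ^ 2) < 1 * (ε * b ^ 2) :=
      mul_lt_mul_of_pos_right h2 (mul_pos hεpos hbb)
    nlinarith [hk, h5]
  have h4 : (2 / n) * ∑ i, c i * nwRes X g i = 2 * lam * Real.sign (g j) := by
    rw [hb] at hb0; linarith
  calc ∑ i, c i * nwRes X g i
      = ((n:ℝ) / 2) * ((2 / n) * ∑ i, c i * nwRes X g i) := by
        field_simp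
    _ = ((n:ℝ) / 2) * (2 * lam * Real.sign (g j)) := by rw [h4]
    _ = n * lam * Real.sign (g j) := by ring

/-- exact expression of `τ̃²` in terms of the projection complement `Q_S`
and the sign vector `κ_S` of the active set. -/
theorem statement12 (n p : ℕ) (hn : 1 ≤ n) (hp : 2 ≤ p)
    (X : Fin n → Fin p → ℝ) (lam : ℝ) (hlam : 0 < lam)
    (g : Fin (p - 1) → ℝ) (hsol : IsNodewiseSol X lam g)
    (S : Finset (Fin (p - 1))) (hS : ∀ j, j ∈ S ↔ g j ≠ 0) (hSne : S.Nonempty)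
    (hind : LinearIndependent ℝ (fun j : {j // j ∈ S} => fun i => X i (colIdx j.1))) :
    tauTildeSq X g =
      (1 / n) * (col0 X ⬝ᵥ
          (((1 : Matrix (Fin n) (Fin n) ℝ) -
              XS X S * ((XS X S)ᵀ * XS X S)⁻¹ * (XS X S)ᵀ).mulVec (col0 X))) +
        lam ^ 2 * ((fun j : {j // j ∈ S} => Real.sign (g j.1)) ⬝ᵥ
          (((1 / (n : ℝ)) • ((XS X S)ᵀ * XS X S))⁻¹.mulVec
            (fun j : {j // j ∈ S} => Real.sign (g j.1)))) := by
  classical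
  have hnpos : (0:ℝ) < n := by
    have : 0 < n := hn
    exact_mod_cast this
  have hn0 : (n:ℝ) ≠ 0 := ne_of_gt hnpos
  unfold tauTildeSq
  set A := XS X S with hA
  set x := col0 X with hx
  set r := nwRes X g with hrdef
  set κ : {j // j ∈ S} → ℝ := fun j : {j // j ∈ S} => Real.sign (g j.1) with hκ
  set gS : {j // j ∈ S} → ℝ := fun j => g j.1 with hgSdef
  set M := Aᵀ * A with hM
  -- the residual in matrix form
  have hres : r = x - A.mulVec gS := by
    funext i
    simp only [hrdef, nwRes, Pi.sub_apply, Matrix.mulVec, dotProduct]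
    have hzero : ∀ j ∈ Finset.univ, j ∉ S → X i (colIdx j) * g j = 0 := by
      intro j _ hj
      have : g j = 0 := by
        by_contra h; exact hj ((hS j).mpr h)
      simp [this]
    have e1 : ∑ j : Fin (p - 1), X i (colIdx j) * g j
        = ∑ j ∈ S, X i (colIdx j) * g j :=
      (Finset.sum_subset (Finset.subset_univ S) hzero).symm
    have e2 : ∑ j ∈ S, X i (colIdx j) * g j
        = ∑ j : {j // j ∈ S}, X i (colIdx j.1) * g j.1 :=
      (Finset.sum_coe_sort S (fun j => X i (colIdx j) * g j)).symm
    rw [e1, e2]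
    rfl
  -- KKT in vector form
  have hkkt : Aᵀ.mulVec r = ((n:ℝ) * lam) • κ := by
    funext j
    have hgj : g j.1 ≠ 0 := (hS j.1).mp j.2
    have hk := nodewise_kkt hn X lam g hsol j.1 hgj
    show ∑ i, A i j * r i = ((n:ℝ) * lam) * Real.sign (g j.1)
    calc ∑ i, A i j * r i = ∑ i, X i (colIdx j.1) * nwRes X g i := rfl
      _ = (n:ℝ) * lam * Real.sign (g j.1) := hk
  -- invertibility of the Gram matrix
  have hAinj : Function.Injective A.mulVec := by
    rw [Matrix.mulVec_injective_iff]
    exact hind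
  have hMdet : IsUnit M.det := by
    rw [← Matrix.isUnit_iff_isUnit_det, ← Matrix.mulVec_injective_iff_isUnit]
    intro v w hvw
    apply hAinj
    have h0 : M.mulVec (v - w) = 0 := by rw [Matrix.mulVec_sub, hvw, sub_self]
    have h2 : (v - w) ⬝ᵥ (M.mulVec (v - w)) = (A.mulVec (v - w)) ⬝ᵥ (A.mulVec (v - w)) := by
      rw [hM, ← Matrix.mulVec_mulVec, Matrix.dotProduct_mulVec, Matrix.vecMul_transpose]
    rw [h0, dotProduct_zero] at h2
    have h3 : A.mulVec (v - w) = 0 := dotProduct_self_eq_zero.mp h2.symm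
    rw [Matrix.mulVec_sub, sub_eq_zero] at h3
    exact h3
  have hMinv : M⁻¹ * M = 1 := Matrix.nonsing_inv_mul M hMdet
  set N := M⁻¹ with hN
  have hMsym : Mᵀ = M := by rw [hM, Matrix.transpose_mul, Matrix.transpose_transpose]
  have hNsym : Nᵀ = N := by rw [hN, Matrix.transpose_nonsing_inv, hMsym]
  set u := Aᵀ.mulVec x with hu
  -- solve for gS
  have hMg : M.mulVec gS = u - ((n:ℝ) * lam) • κ := by
    have h3 : ((n:ℝ) * lam) • κ = u - M.mulVec gS := by
      rw [← hkkt, hres, Matrix.mulVec_sub, Matrix.mulVec_mulVec, hu, hM]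
    rw [h3, sub_sub_cancel]
  have hgSol : gS = N.mulVec (u - ((n:ℝ) * lam) • κ) := by
    rw [← hMg, Matrix.mulVec_mulVec, hN, hMinv, Matrix.one_mulVec]
  -- dot-product helpers
  have hdotA : ∀ (v : Fin n → ℝ) (z : {j // j ∈ S} → ℝ),
      v ⬝ᵥ A.mulVec z = (Aᵀ.mulVec v) ⬝ᵥ z := by
    intro v z
    rw [Matrix.dotProduct_mulVec, Matrix.mulVec_transpose]
  have hdotA' : ∀ (z : {j // j ∈ S} → ℝ) (v : Fin n → ℝ),
      (A.mulVec z) ⬝ᵥ v = z ⬝ᵥ (Aᵀ.mulVec v) := by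
    intro z v
    rw [dotProduct_comm, hdotA, dotProduct_comm]
  have hNswap : ∀ v w : {j // j ∈ S} → ℝ, v ⬝ᵥ N.mulVec w = w ⬝ᵥ N.mulVec v := by
    intro v w
    rw [Matrix.dotProduct_mulVec]
    conv_lhs => rw [← hNsym, Matrix.vecMul_transpose]
    exact dotProduct_comm _ _
  have hsqr : sqNorm r = r ⬝ᵥ r := by
    simp [sqNorm, dotProduct, sq]
  -- main expansion
  have e1 : r ⬝ᵥ r = x ⬝ᵥ r - gS ⬝ᵥ (((n:ℝ) * lam) • κ) := by
    nth_rewrite 1 [hres]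
    rw [sub_dotProduct, hdotA', hkkt]
  have e2 : x ⬝ᵥ r = x ⬝ᵥ x - u ⬝ᵥ gS := by
    rw [hres, dotProduct_sub, hdotA, ← hu]
  have e3 : u ⬝ᵥ gS = u ⬝ᵥ N.mulVec u - ((n:ℝ) * lam) * (u ⬝ᵥ N.mulVec κ) := by
    rw [hgSol, Matrix.mulVec_sub, dotProduct_sub, Matrix.mulVec_smul,
      dotProduct_smul, smul_eq_mul]
  have e4 : gS ⬝ᵥ (((n:ℝ) * lam) • κ) = ((n:ℝ) * lam) * (gS ⬝ᵥ κ) := by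
    rw [dotProduct_smul, smul_eq_mul]
  have e5 : gS ⬝ᵥ κ = u ⬝ᵥ N.mulVec κ - ((n:ℝ) * lam) * (κ ⬝ᵥ N.mulVec κ) := by
    rw [dotProduct_comm, hgSol, Matrix.mulVec_sub, dotProduct_sub,
      Matrix.mulVec_smul, dotProduct_smul, smul_eq_mul, hNswap κ u]
  have main : r ⬝ᵥ r = x ⬝ᵥ x - u ⬝ᵥ N.mulVec u
      + ((n:ℝ) * lam) ^ 2 * (κ ⬝ᵥ N.mulVec κ) := by
    rw [e1, e2, e3, e4, e5]; ring
  -- the projection term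
  have eQ : x ⬝ᵥ (((1 : Matrix (Fin n) (Fin n) ℝ) - A * N * Aᵀ).mulVec x)
      = x ⬝ᵥ x - u ⬝ᵥ N.mulVec u := by
    rw [Matrix.sub_mulVec, Matrix.one_mulVec, dotProduct_sub]
    congr 1
    rw [Matrix.mul_assoc, ← Matrix.mulVec_mulVec, hdotA, ← Matrix.mulVec_mulVec, ← hu]
  -- the scaled inverse
  have eInv : ((1 / (n:ℝ)) • M)⁻¹ = (n:ℝ) • N := by
    refine Matrix.inv_eq_right_inv ?_
    rw [Matrix.smul_mul, Matrix.mul_smul, smul_smul, one_div, inv_mul_cancel₀ hn0,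
      one_smul, hN, Matrix.mul_nonsing_inv M hMdet]
  rw [hsqr, main, eQ, eInv, Matrix.smul_mulVec, dotProduct_smul, smul_eq_mul]
  field_simp


end
end
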